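/- The Next Fit bin packing algorithm is monotone: for any finite sequence of items with sizes in (0,1], removing one item from the sequence does not increase the number of bins used by Next Fit. -/
import Mathlib


/-- One step of Next Fit: state is (number of bins opened so far, level of the open bin).
The initial level is set to `2` so that the first item always opens a new bin. -/
noncomputable def nfStep (s : ℕ × ℝ) (x : ℝ) : ℕ × ℝ :=
  if s.2 + x ≤ 1 then (s.1, s.2 + x) else (s.1 + 1, x)

/-- The number of bins Next Fit uses on the sequence `l`. -/
noncomputable def nfCost (l : List ℝ) : ℕ := (l.foldl nfStep (0, 2)).1

/-- Dominance relation on states: nonnegative levels, and either strictly fewer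
bins, or equal bins with level at most as high. -/
def nfRel (s' s : ℕ × ℝ) : Prop :=
  0 ≤ s'.2 ∧ 0 ≤ s.2 ∧ (s'.1 < s.1 ∨ (s'.1 = s.1 ∧ s'.2 ≤ s.2))

lemma nfRel_step {s' s : ℕ × ℝ} (hr : nfRel s' s) {y : ℝ} (hy : 0 < y) :
    nfRel (nfStep s' y) (nfStep s y) := by
  obtain ⟨h1, h2, h3⟩ := hr
  unfold nfStep nfRel
  split_ifs with a b b <;> refine ⟨by simp; linarith, by simp; linarith, ?_⟩ <;>
    simp only
  · rcases h3 with hlt | ⟨heq, hle⟩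
    · exact Or.inl hlt
    · exact Or.inr ⟨heq, by linarith⟩
  · rcases h3 with hlt | ⟨heq, hle⟩
    · exact Or.inl (by omega)
    · exact Or.inl (by omega)
  · rcases h3 with hlt | ⟨heq, hle⟩
    · rcases lt_or_eq_of_le (Nat.succ_le_of_lt hlt) with hc | hc
      · exact Or.inl hc
      · exact Or.inr ⟨hc, by linarith⟩
    · exact absurd (le_trans (by linarith : s'.2 + y ≤ s.2 + y) b) (by linarith)
  · rcases h3 with hlt | ⟨heq, hle⟩
    · exact Or.inl (by omega)
    · exact Or.inr ⟨by omega, le_refl y⟩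

lemma nfRel_foldl {s' s : ℕ × ℝ} (hr : nfRel s' s) (l : List ℝ)
    (hl : ∀ y ∈ l, 0 < y ∧ y ≤ 1) :
    nfRel (l.foldl nfStep s') (l.foldl nfStep s) := by
  induction l generalizing s' s with
  | nil => exact hr
  | cons a t ih =>
    simp only [List.foldl_cons]
    exact ih (nfRel_step hr (hl a (by simp)).1) (fun y hy => hl y (by simp [hy]))

lemma nfLevel_nonneg (l : List ℝ) (s : ℕ × ℝ) (hs : 0 ≤ s.2)
    (hl : ∀ y ∈ l, 0 < y) : 0 ≤ (l.foldl nfStep s).2 := by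
  induction l generalizing s with
  | nil => exact hs
  | cons a t ih =>
    simp only [List.foldl_cons]
    have ha := hl a (by simp)
    refine ih _ ?_ (fun y hy => hl y (by simp [hy]))
    unfold nfStep; split_ifs <;> simp <;> linarith

/-- Next Fit is monotone: removing one item from a sequence of items with
sizes in (0,1] does not increase the number of bins used. -/
theorem nextFit_monotone (l₁ l₂ : List ℝ) (x : ℝ)
    (h : ∀ y ∈ l₁ ++ x :: l₂, 0 < y ∧ y ≤ 1) :
    nfCost (l₁ ++ l₂) ≤ nfCost (l₁ ++ x :: l₂) := by
  unfold nfCost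
  rw [List.foldl_append, List.foldl_append, List.foldl_cons]
  set s := l₁.foldl nfStep (0, 2) with hs
  have hs2 : 0 ≤ s.2 :=
    nfLevel_nonneg l₁ (0, 2) (by norm_num)
      (fun y hy => (h y (by simp [hy])).1)
  have hx : 0 < x := (h x (by simp)).1
  have hrel : nfRel s (nfStep s x) := by
    unfold nfStep nfRel
    split_ifs with a
    · exact ⟨hs2, by simp; linarith, Or.inr ⟨rfl, by simp; linarith⟩⟩
    · exact ⟨hs2, by simp; linarith, Or.inl (by simp)⟩
  have hfin := nfRel_foldl hrel l₂ (fun y hy => h y (by simp [hy]))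
  rcases hfin.2.2 with hlt | ⟨heq, _⟩
  · exact le_of_lt hlt
  · exact le_of_eq heq
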